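/- arXiv:2404.09347 — 4 statements merged into one kernel-verified Lean document; each statement's English description precedes it below -/
import Mathlib

section
/- For any matroid M = (E, r) on a finite ground set E and any real number q ∉ {0, 1}, the characteristic polynomial of the dual matroid satisfies χ_{M*}(q) · (1/(1 - q))^{|E|} = Σ_{A ⊆ E} (-1)^{|E|-|A|} · (χ_{M|A}(q) / q^{r(A)}) · (1/(1 - q^{-1}))^{|A|}, where M|A denotes the restriction of M to A. -/
/-! Complementing the summation index turns `χ_{M*}(q)` into
`∑_B (-1)^{|E|-|B|} q^{|B|-r(B)}`. On the right, expand `χ_{M|A}(q) / q^{r(A)}` as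
`∑_{B ⊆ A} (-1)^{|B|} q^{-r(B)}` and exchange the sums: for fixed `B`, the sum of
`(-1)^{|E|-|A|} ζ^{|A|}` over `A ⊇ B` is the binomial sum `ζ^{|B|} (ζ - 1)^{|E|-|B|}`.
Since `ζ_q(1) = -q ζ_q(-1)` and `ζ_q(1) - 1 = -ζ_q(-1)`, the two sides then agree term by term. -/

open Finset

/-- A matroid on a finite ground set `E`, given by its rank function. -/
structure FinMatroid (E : Type*) [Fintype E] [DecidableEq E] where
  rk : Finset E → ℕ
  rk_le_card : ∀ A, rk A ≤ A.card
  rk_mono : ∀ ⦃A B : Finset E⦄, A ⊆ B → rk A ≤ rk B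
  rk_submod : ∀ A B, rk (A ∪ B) + rk (A ∩ B) ≤ rk A + rk B

namespace FinMatroid

variable {E : Type*} [Fintype E] [DecidableEq E] (M : FinMatroid E)

/-- The rank function of the dual matroid: `r*(A) = r(E \ A) + |A| - r(E)`. -/
def dualRk (A : Finset E) : ℕ := M.rk Aᶜ + A.card - M.rk univ

/-- The characteristic polynomial `χ_M(x) = ∑_{A ⊆ E} (-1)^{|A|} x^{r(E) - r(A)}`. -/
def charPoly (x : ℝ) : ℝ :=
  ∑ A : Finset E, (-1 : ℝ) ^ A.card * x ^ (M.rk univ - M.rk A)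

/-- The characteristic polynomial of the dual matroid `M*`. -/
def dualCharPoly (x : ℝ) : ℝ :=
  ∑ A : Finset E, (-1 : ℝ) ^ A.card * x ^ (M.dualRk univ - M.dualRk A)

/-- The characteristic polynomial of the restriction `M|A`. -/
def restrictCharPoly (A : Finset E) (x : ℝ) : ℝ :=
  ∑ B ∈ A.powerset, (-1 : ℝ) ^ B.card * x ^ (M.rk A - M.rk B)

/-- The characteristic polynomial of the contraction `M/A`:
its ground set is `Aᶜ`, its rank function is `B ↦ r(A ∪ B) - r(A)`, so the
exponent `r_{M/A}(Aᶜ) - r_{M/A}(B)` equals `r(E) - r(A ∪ B)`. -/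
def contractCharPoly (A : Finset E) (x : ℝ) : ℝ :=
  ∑ B ∈ Aᶜ.powerset, (-1 : ℝ) ^ B.card * x ^ (M.rk univ - M.rk (A ∪ B))

/-- The Tutte polynomial `T_M(x,y) = ∑_{A ⊆ E} (x-1)^{r(E)-r(A)} (y-1)^{|A|-r(A)}`. -/
def tutte (x y : ℝ) : ℝ :=
  ∑ A : Finset E, (x - 1) ^ (M.rk univ - M.rk A) * (y - 1) ^ (A.card - M.rk A)

/-- The Tutte polynomial of the dual matroid `M*`. -/
def dualTutte (x y : ℝ) : ℝ :=
  ∑ A : Finset E, (x - 1) ^ (M.dualRk univ - M.dualRk A) * (y - 1) ^ (A.card - M.dualRk A)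

/-- The Tutte polynomial of the restriction `M|A`. -/
def restrictTutte (A : Finset E) (x y : ℝ) : ℝ :=
  ∑ B ∈ A.powerset, (x - 1) ^ (M.rk A - M.rk B) * (y - 1) ^ (B.card - M.rk B)

/-- The Tutte polynomial of the contraction `M/A` (ground set `Aᶜ`,
rank function `B ↦ r(A ∪ B) - r(A)`). -/
def contractTutte (A : Finset E) (x y : ℝ) : ℝ :=
  ∑ B ∈ Aᶜ.powerset,
    (x - 1) ^ ((M.rk univ - M.rk A) - (M.rk (A ∪ B) - M.rk A)) *
      (y - 1) ^ (B.card - (M.rk (A ∪ B) - M.rk A))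

end FinMatroid

theorem Finset.sum_superset_neg_one_pow_mul_pow {E R : Type*} [Fintype E] [DecidableEq E]
    [CommRing R] (B : Finset E) (z : R) :
    ∑ A with B ⊆ A, (-1 : R) ^ (Fintype.card E - #A) * z ^ #A =
      z ^ #B * (z - 1) ^ (Fintype.card E - #B) := by
  calc ∑ A with B ⊆ A, (-1 : R) ^ (Fintype.card E - #A) * z ^ #A
      = ∑ D ∈ Bᶜ.powerset, (-1 : R) ^ #D * z ^ (Fintype.card E - #D) := by
        refine sum_nbij' compl compl (by simp)
          (fun D hD => by simpa using subset_compl_comm.mp (mem_powerset.mp hD))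
          (by simp) (by simp) fun A _ => ?_
        rw [card_compl, Nat.sub_sub_self (card_le_univ A)]
    _ = ∑ D ∈ Bᶜ.powerset, z ^ #B * ((-1 : R) ^ #D * z ^ (#Bᶜ - #D)) := by
        refine sum_congr rfl fun D hD => ?_
        have := card_le_card (mem_powerset.mp hD)
        have := card_le_univ B
        have := card_compl B
        rw [mul_left_comm, ← pow_add]
        congr 3
        omega
    _ = z ^ #B * (z - 1) ^ (Fintype.card E - #B) := by
        rw [← mul_sum, sum_pow_mul_eq_add_pow, neg_add_eq_sub, card_compl]

theorem one_div_one_sub_inv {K : Type*} [Field K] {q : K} (hq0 : q ≠ 0) :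
    1 / (1 - q⁻¹) = -q * (1 / (1 - q)) := by
  have : 1 - q⁻¹ = -(1 - q) / q := by field_simp; ring
  rw [this, one_div_div, div_neg, neg_mul, mul_one_div]

theorem one_div_one_sub_inv_sub_one {K : Type*} [Field K] {q : K} (hq0 : q ≠ 0) (hq1 : q ≠ 1) :
    1 / (1 - q⁻¹) - 1 = -(1 / (1 - q)) := by
  have : 1 - q ≠ 0 := sub_ne_zero.mpr hq1.symm
  rw [one_div_one_sub_inv hq0]
  field_simp
  ring

theorem neg_one_pow_mul_inv_pow_mul_neg_mul_pow {K : Type*} [Field K] {x w : K} (hx : x ≠ 0)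
    {r k n : ℕ} (hrk : r ≤ k) (hkn : k ≤ n) :
    (-1) ^ k * (x ^ r)⁻¹ * ((-x * w) ^ k * (-w) ^ (n - k)) =
      (-1) ^ (n - k) * x ^ (k - r) * w ^ n := by
  rw [neg_mul, neg_pow (x * w), neg_pow w, mul_pow, pow_sub₀ x hx hrk, ← pow_mul_pow_sub w hkn]
  linear_combination (x ^ r)⁻¹ * x ^ k * w ^ k * (-1) ^ (n - k) * w ^ (n - k) *
    pow_mul_pow_eq_one k (by norm_num : (-1 : K) * -1 = 1)

namespace FinMatroid

variable {E : Type*} [Fintype E] [DecidableEq E] (M : FinMatroid E)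

theorem rk_empty : M.rk ∅ = 0 :=
  Nat.le_zero.mp (M.rk_le_card ∅)

theorem rk_univ_le_rk_add_rk_compl (A : Finset E) : M.rk univ ≤ M.rk A + M.rk Aᶜ := by
  simpa [rk_empty] using M.rk_submod A Aᶜ

theorem dualRk_univ_sub_dualRk (A : Finset E) :
    M.dualRk univ - M.dualRk A = #Aᶜ - M.rk Aᶜ := by
  have := M.rk_univ_le_rk_add_rk_compl A
  have := M.rk_le_card A
  have := card_compl A
  simp only [dualRk, compl_univ, rk_empty, card_univ]
  omega

theorem dualCharPoly_eq_sum (x : ℝ) :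
    M.dualCharPoly x = ∑ B : Finset E, (-1 : ℝ) ^ (Fintype.card E - #B) * x ^ (#B - M.rk B) := by
  refine Fintype.sum_bijective compl compl_involutive.bijective _ _ fun A => ?_
  rw [dualRk_univ_sub_dualRk, card_compl, Nat.sub_sub_self (card_le_univ A)]

theorem restrictCharPoly_div_pow_rk {x : ℝ} (hx : x ≠ 0) (A : Finset E) :
    M.restrictCharPoly A x / x ^ M.rk A = ∑ B ∈ A.powerset, (-1 : ℝ) ^ #B * (x ^ M.rk B)⁻¹ := by
  rw [restrictCharPoly, sum_div]
  refine sum_congr rfl fun B hB => ?_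
  rw [pow_sub₀ x hx (M.rk_mono (mem_powerset.mp hB))]
  field_simp

end FinMatroid

/-- Matroid form of the Matiyasevich formula:
`χ_{M*}(q) ζ_q(-1)^{|E|} = ∑_{A ⊆ E} (-1)^{|E|-|A|} (χ_{M|A}(q)/q^{r(A)}) ζ_q(1)^{|A|}`,
where `ζ_q(-1) = 1/(1-q)` and `ζ_q(1) = 1/(1-q⁻¹)`. -/
theorem matiyasevich_restriction {E : Type*} [Fintype E] [DecidableEq E]
    (M : FinMatroid E) (q : ℝ) (hq0 : q ≠ 0) (hq1 : q ≠ 1) :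
    M.dualCharPoly q * (1 / (1 - q)) ^ Fintype.card E =
      ∑ A : Finset E, (-1 : ℝ) ^ (Fintype.card E - A.card) *
        (M.restrictCharPoly A q / q ^ M.rk A) * (1 / (1 - q⁻¹)) ^ A.card := by
  set ζ : ℝ := 1 / (1 - q⁻¹) with hζ
  calc M.dualCharPoly q * (1 / (1 - q)) ^ Fintype.card E
      = ∑ B : Finset E, (-1 : ℝ) ^ #B * (q ^ M.rk B)⁻¹ *
          (ζ ^ #B * (ζ - 1) ^ (Fintype.card E - #B)) := by
        rw [M.dualCharPoly_eq_sum, sum_mul]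
        refine sum_congr rfl fun B _ => ?_
        rw [hζ, one_div_one_sub_inv_sub_one hq0 hq1, one_div_one_sub_inv hq0,
          neg_one_pow_mul_inv_pow_mul_neg_mul_pow hq0 (M.rk_le_card B) (card_le_univ B)]
    _ = ∑ B : Finset E, ∑ A with B ⊆ A,
          (-1 : ℝ) ^ #B * (q ^ M.rk B)⁻¹ * ((-1 : ℝ) ^ (Fintype.card E - #A) * ζ ^ #A) := by
        refine sum_congr rfl fun B _ => ?_
        rw [← mul_sum, sum_superset_neg_one_pow_mul_pow]
    _ = ∑ A : Finset E, ∑ B ∈ A.powerset,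
          (-1 : ℝ) ^ #B * (q ^ M.rk B)⁻¹ * ((-1 : ℝ) ^ (Fintype.card E - #A) * ζ ^ #A) :=
        (sum_comm' fun B A => by simp).symm
    _ = _ := by
        refine sum_congr rfl fun A _ => ?_
        rw [M.restrictCharPoly_div_pow_rk hq0, mul_sum, sum_mul]
        exact sum_congr rfl fun B _ => by ring
end

section
/- For any matroid M = (E, r) on a finite ground set E, the characteristic polynomial of the dual matroid satisfies χ_{M*}(x) = ((−1)^{|E|} / x^{r(E)}) · Σ_{A ⊆ E} (1 − x)^{|A|} · χ_{M/A}(x), as an identity of rational functions (or polynomials after clearing x^{r(E)}). -/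
/-! Writing `C` for the complement of the summation set,
`x^{r(E)} χ_{M*}(x) = ∑_C (-1)^{|E∖C|} x^{r(E) - r(C) + |C|}`, because the corank of `E∖C` in `M*`
is the nullity `|C| - r(C)` of `C` in `M`. On the other side, grouping the pairs `(A, B)` with
`B ⊆ E∖A` by `C = A ∪ B` gives `∑_C x^{r(E) - r(C)} ∑_{A ⊆ C} (1 - x)^{|A|} (-1)^{|C∖A|}`, and the
inner sum is `(-x)^{|C|}` by the binomial theorem. The two sides then agree term by term. -/

open Finset

theorem Finset.sum_sum_powerset_compl {α β : Type*} [Fintype α] [DecidableEq α]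
    [AddCommMonoid β] (f : Finset α → Finset α → β) :
    ∑ A, ∑ B ∈ Aᶜ.powerset, f A B = ∑ C, ∑ A ∈ C.powerset, f A (C \ A) := by
  rw [sum_sigma', sum_sigma']
  refine sum_nbij' (fun p ↦ ⟨p.1 ∪ p.2, p.1⟩) (fun p ↦ ⟨p.2, p.1 \ p.2⟩)
    ?_ ?_ ?_ ?_ ?_ <;>
    simp only [mem_sigma, mem_univ, mem_powerset, true_and, subset_compl_iff_disjoint_right,
      Sigma.forall, Sigma.mk.injEq, heq_eq_eq, and_true]
  · exact fun _ _ _ ↦ subset_union_left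
  · exact fun _ _ _ ↦ disjoint_sdiff_self_left
  · exact fun _ _ h ↦ union_sdiff_cancel_left h.symm
  · exact fun _ _ h ↦ union_sdiff_of_subset h
  · exact fun _ _ h ↦ by rw [union_sdiff_cancel_left h.symm]

namespace FinMatroid

variable {E : Type*} [Fintype E] [DecidableEq E] (M : FinMatroid E)

theorem rk_union_le_rk_add_card (A B : Finset E) : M.rk (A ∪ B) ≤ M.rk A + B.card :=
  calc M.rk (A ∪ B) ≤ M.rk (A ∪ B) + M.rk (A ∩ B) := Nat.le_add_right _ _
    _ ≤ M.rk A + M.rk B := M.rk_submod A B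
    _ ≤ M.rk A + B.card := Nat.add_le_add_left (M.rk_le_card B) _

theorem dualRk_univ_sub_dualRk_compl (C : Finset E) :
    M.dualRk univ - M.dualRk Cᶜ = C.card - M.rk C := by
  have hrk_univ_le : M.rk univ ≤ M.rk C + Cᶜ.card := by
    simpa only [union_compl] using M.rk_union_le_rk_add_card C Cᶜ
  have hcard : Cᶜ.card + C.card = Fintype.card E := card_compl_add_card C
  have hrk_le_card := M.rk_le_card C
  have hrk_le_rk_univ : M.rk C ≤ M.rk univ := M.rk_mono (subset_univ C)
  simp only [dualRk, compl_univ, compl_compl, rk_empty, card_univ]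
  omega

theorem dualCharPoly_eq_sum_compl (x : ℝ) :
    M.dualCharPoly x = ∑ C : Finset E, (-1 : ℝ) ^ Cᶜ.card * x ^ (C.card - M.rk C) := by
  refine Fintype.sum_bijective compl compl_involutive.bijective _ _ fun A ↦ ?_
  rw [compl_compl, ← dualRk_univ_sub_dualRk_compl, compl_compl]

theorem sum_pow_mul_contractCharPoly (x : ℝ) :
    ∑ A : Finset E, (1 - x) ^ A.card * M.contractCharPoly A x =
      ∑ C : Finset E, (-x) ^ C.card * x ^ (M.rk univ - M.rk C) := by
  simp only [contractCharPoly, mul_sum]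
  rw [sum_sum_powerset_compl]
  refine sum_congr rfl fun C _ ↦ ?_
  have hbinomial :
      ∑ A ∈ C.powerset, (1 - x) ^ A.card * (-1) ^ (C.card - A.card) = (-x) ^ C.card := by
    rw [sum_pow_mul_eq_add_pow]
    ring_nf
  rw [← hbinomial, sum_mul]
  refine sum_congr rfl fun A hA ↦ ?_
  rw [union_sdiff_of_subset (mem_powerset.mp hA), card_sdiff_of_subset (mem_powerset.mp hA)]
  ring

end FinMatroid

/-- `χ_{M*}(x) = ((-1)^{|E|} / x^{r(E)}) ∑_{A ⊆ E} (1-x)^{|A|} χ_{M/A}(x)`,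
stated as a polynomial identity after clearing `x^{r(E)}`. -/
theorem dualCharPoly_eq_sum_contractions {E : Type*} [Fintype E] [DecidableEq E]
    (M : FinMatroid E) (x : ℝ) :
    x ^ M.rk Finset.univ * M.dualCharPoly x =
      (-1 : ℝ) ^ Fintype.card E *
        ∑ A : Finset E, (1 - x) ^ A.card * M.contractCharPoly A x := by
  rw [M.dualCharPoly_eq_sum_compl, M.sum_pow_mul_contractCharPoly, mul_sum, mul_sum]
  refine sum_congr rfl fun C _ ↦ ?_
  have hpow :
      x ^ M.rk univ * x ^ (C.card - M.rk C) = x ^ (M.rk univ - M.rk C) * x ^ C.card := by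
    have hrk_le_card := M.rk_le_card C
    have hrk_le_rk_univ := M.rk_mono (subset_univ C)
    rw [← pow_add, ← pow_add]
    congr 1
    omega
  have hsign : (-1 : ℝ) ^ Fintype.card E = (-1) ^ Cᶜ.card * (-1) ^ C.card := by
    rw [← pow_add, card_compl_add_card]
  have hsq : (-1 : ℝ) ^ C.card * (-1) ^ C.card = 1 := by
    rw [← mul_pow]
    norm_num
  rw [hsign, neg_pow x]
  linear_combination (-1 : ℝ) ^ Cᶜ.card * hpow -
    (-1 : ℝ) ^ Cᶜ.card * x ^ (M.rk univ - M.rk C) * x ^ C.card * hsq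
end

section
/- For the complete graph K_n on n vertices, the flow polynomial satisfies F_{K_n}(x) = ((−1)^{n(n−1)/2} / x^n) · Σ_λ f(λ) · (1 − x)^{s(λ)} · x(x−1)⋯(x − ℓ(λ) + 1), where the sum is over all integer partitions λ of n, ℓ(λ) is the number of parts, s(λ) = Σ_i λ_i(λ_i − 1)/2, and f(λ) is the Faà di Bruno coefficient of λ. -/
open Finset

/-- The edge set of the complete graph `K_n`: unordered pairs, encoded as
ordered pairs `(i, j)` with `i < j`. -/
def KEdge (n : ℕ) : Type := {p : Fin n × Fin n // p.1 < p.2}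

instance (n : ℕ) : Fintype (KEdge n) := Subtype.fintype _
instance (n : ℕ) : DecidableEq (KEdge n) := Subtype.instDecidableEq

/-- The spanning subgraph of `K_n` with edge set `A`. -/
def graphOf (n : ℕ) (A : Finset (KEdge n)) : SimpleGraph (Fin n) where
  Adj i j := ∃ e ∈ A, (e.val = (i, j) ∨ e.val = (j, i))
  symm := by
    constructor
    intro i j ⟨e, he, h⟩
    exact ⟨e, he, h.symm⟩
  loopless := by
    constructor
    rintro i ⟨e, he, h⟩
    rcases h with h | h <;>
      · have := e.property
        rw [h] at this
        exact lt_irrefl i this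

/-- The rank function of the cycle matroid of `K_n`:
`r(A) = |V| - c(A)`, the number of vertices minus the number of connected
components of the spanning subgraph with edge set `A`. -/
noncomputable def cycleRk (n : ℕ) (A : Finset (KEdge n)) : ℕ :=
  n - Nat.card (graphOf n A).ConnectedComponent

/-- The rank function of the bond matroid (dual of the cycle matroid) of `K_n`. -/
noncomputable def bondRk (n : ℕ) (A : Finset (KEdge n)) : ℕ :=
  cycleRk n Aᶜ + A.card - cycleRk n univ

/-- The flow polynomial of `K_n`, i.e. the characteristic polynomial of the
bond matroid of `K_n`, as a polynomial in `ℝ[x]`. -/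
noncomputable def flowPolyKn (n : ℕ) : Polynomial ℝ :=
  ∑ A : Finset (KEdge n),
    ((-1 : ℝ) ^ A.card) • (Polynomial.X ^ (bondRk n univ - bondRk n A))

/-- `s(λ) = ∑_i λ_i (λ_i - 1) / 2` for a partition `λ`. -/
def partS (n : ℕ) (lam : n.Partition) : ℕ :=
  (lam.parts.map fun a => a * (a - 1) / 2).sum

/-- The Faà di Bruno coefficient `f(λ) = n! / (∏_i (i!)^{n_i} n_i!)`. -/
def faaDiBruno (n : ℕ) (lam : n.Partition) : ℕ :=
  Nat.factorial n /
    ∏ i ∈ lam.parts.toFinset,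
      (Nat.factorial i ^ lam.parts.count i * Nat.factorial (lam.parts.count i))

/-! Write `c(B)` for the number of connected components of the spanning subgraph of `K_n` with
edge set `B`. Duality of the cycle and bond matroids turns the flow polynomial into
`x ^ n F(x) = (-1) ^ |E| ∑_B (-x) ^ |B| x ^ c(B)`. For a positive integer `q`, expanding
`(1 - x) ^ (number of monochromatic edges)` over subsets of the monochromatic edges gives
`∑_B (-x) ^ |B| q ^ c(B) = ∑_{f : [n] → [q]} ∏_c (1 - x) ^ C(|f⁻¹ c|, 2)`. Such a sum of products
of weights `g(|f⁻¹ c|)` over colour classes (with `g 0 = 1`) is the exponential formula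
`∑_λ f(λ) ∏_i g(λ_i) q(q-1)⋯(q-ℓ(λ)+1)`: splitting off the class of the last colour gives a
recursion in `q`, which the partition sum satisfies because
`(q+1)_ℓ = (q)_ℓ + ℓ (q)_{ℓ-1}` and `C(n, j) f(λ ∖ j) = (multiplicity of j in λ) f(λ)`.
Both sides are polynomials in `q`, so the identity holds at `q = x`. -/

namespace SimpleGraph

variable {V : Type*} {G : SimpleGraph V}

theorem Reachable.apply_eq_of_adj {β : Type*} {f : V → β}
    (hf : ∀ ⦃u v⦄, G.Adj u v → f u = f v) {a b : V} (h : G.Reachable a b) : f a = f b := by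
  obtain ⟨p⟩ := h
  induction p with
  | nil => rfl
  | cons hadj _ ih => exact (hf hadj).trans ih

theorem card_connectedComponent_le_card_sup_edge_add_one [Finite V] (u v : V) :
    Nat.card G.ConnectedComponent ≤ Nat.card (G ⊔ edge u v).ConnectedComponent + 1 := by
  classical
  have := Fintype.ofFinite V
  set K : Finset G.ConnectedComponent := {G.connectedComponentMk u, G.connectedComponentMk v}
  -- Merging the components of `u` and `v` into one point gives a map constant along the new edge.
  let φ : V → Option G.ConnectedComponent := fun a =>
    if G.connectedComponentMk a ∈ K then none else some (G.connectedComponentMk a)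
  have hφ : ∀ ⦃a b⦄, (G ⊔ edge u v).Adj a b → φ a = φ b := by
    intro a b hab
    rcases hab with hab | hab
    · simp only [φ, ConnectedComponent.sound hab.reachable]
    · rw [edge_adj] at hab
      rcases hab.1 with ⟨rfl, rfl⟩ | ⟨rfl, rfl⟩ <;> simp [φ, K]
  have hinj : Set.InjOn (ConnectedComponent.map (Hom.ofLE (le_sup_left : G ≤ G ⊔ edge u v)))
      ↑(Finset.univ.erase (G.connectedComponentMk v)) := by
    intro C hC D hD hCD
    induction C using ConnectedComponent.ind with | h a => ?_
    induction D using ConnectedComponent.ind with | h b => ?_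
    simp only [ConnectedComponent.map_mk, ConnectedComponent.eq] at hCD
    have := hCD.apply_eq_of_adj hφ
    simp only [Finset.coe_erase, Finset.coe_univ, Set.mem_sdiff, Set.mem_univ,
      Set.mem_singleton_iff, true_and] at hC hD
    by_cases ha : G.connectedComponentMk a ∈ K <;> by_cases hb : G.connectedComponentMk b ∈ K
    · simp only [K, Finset.mem_insert, Finset.mem_singleton] at ha hb
      rw [ha.resolve_right hC, hb.resolve_right hD]
    all_goals simp_all [φ]
  have := Finset.card_le_card_of_injOn _ (fun _ _ => Finset.mem_univ _) hinj
  rw [Finset.card_erase_of_mem (Finset.mem_univ _)] at this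
  simp only [Nat.card_eq_fintype_card, Finset.card_univ] at this ⊢
  omega

def ConnectedComponent.liftEquiv (β : Type*) :
    {f : V → β // ∀ ⦃u v⦄, G.Adj u v → f u = f v} ≃ (G.ConnectedComponent → β) where
  toFun f := ConnectedComponent.lift f.1 fun _ _ p _ => p.reachable.apply_eq_of_adj f.2
  invFun h := ⟨h ∘ G.connectedComponentMk, fun _ _ hadj =>
    congrArg h (ConnectedComponent.sound hadj.reachable)⟩
  left_inv _ := rfl
  right_inv _ := funext fun C => C.ind fun _ => rfl

end SimpleGraph

theorem descPochhammer_eval_add_one {R : Type*} [CommRing R] (n : ℕ) (y : R) :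
    (descPochhammer R n).eval (y + 1) =
      (descPochhammer R n).eval y + n * (descPochhammer R (n - 1)).eval y := by
  cases n with
  | zero => simp
  | succ k =>
    have h : (descPochhammer R (k + 1)).eval (y + 1) = (y + 1) * (descPochhammer R k).eval y := by
      simp [descPochhammer_succ_left]
    rw [h, descPochhammer_succ_eval, Nat.add_sub_cancel]
    push_cast
    ring

namespace Multiset

theorem prod_map_pow_eq_pow_sum {ι M : Type*} [CommMonoid M] (m : Multiset ι) (f : ι → ℕ)
    (a : M) : (m.map fun i => a ^ f i).prod = a ^ (m.map f).sum :=
  Multiset.induction_on m (by simp) fun _ _ ih => by simp [pow_add, ih]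

theorem bell_mul_count {m : Multiset ℕ} {a : ℕ} (ha : a ≠ 0) (hm : a ∈ m) :
    m.bell * m.count a = m.sum.choose a * (m.erase a).bell := by
  set m' := m.erase a
  set T := m.toFinset.erase 0
  have hsum : m.sum = m'.sum + a := by rw [← sum_erase hm, add_comm]
  have hfact : (m.map Nat.factorial).prod = a.factorial * (m'.map Nat.factorial).prod :=
    (prod_map_erase hm).symm
  have hcount : ∏ j ∈ T, (m.count j).factorial =
      m.count a * ∏ j ∈ m'.toFinset.erase 0, (m'.count j).factorial := by
    have hT : a ∈ T := Finset.mem_erase.2 ⟨ha, mem_toFinset.2 hm⟩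
    have hsub : ∏ j ∈ m'.toFinset.erase 0, (m'.count j).factorial =
        ∏ j ∈ T, (m'.count j).factorial := by
      refine prod_subset (fun j hj => ?_) (fun j hjT hj => ?_)
      · simp only [T, Finset.mem_erase, mem_toFinset] at hj ⊢
        exact ⟨hj.1, mem_of_mem_erase hj.2⟩
      · have : j ∉ m' := fun h =>
          hj (Finset.mem_erase.2 ⟨Finset.ne_of_mem_erase hjT, mem_toFinset.2 h⟩)
        simp [count_eq_zero.2 this]
    rw [hsub, ← mul_prod_erase T _ hT, ← mul_prod_erase T (fun j => (m'.count j).factorial) hT,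
      count_erase_self, ← mul_assoc, Nat.mul_factorial_pred (count_ne_zero.2 hm)]
    congr 1
    exact prod_congr rfl fun j hj => by rw [count_erase_of_ne (Finset.ne_of_mem_erase hj)]
  have h := bell_mul_eq m
  have h' := bell_mul_eq m'
  rw [hfact, hcount, hsum, ← Nat.add_choose_mul_factorial_mul_factorial, ← h'] at h
  have hpos : 0 < a.factorial * (m'.map Nat.factorial).prod *
      ∏ j ∈ m'.toFinset.erase 0, (m'.count j).factorial := by
    refine Nat.mul_pos (Nat.mul_pos (Nat.factorial_pos a) (prod_pos ?_))
      (Finset.prod_pos fun _ _ => Nat.factorial_pos _)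
    simp [Nat.factorial_pos]
  refine Nat.eq_of_mul_eq_mul_right hpos ?_
  rw [hsum]
  linarith

end Multiset

theorem Nat.Partition.sum_sum_parts_erase {M : Type*} [AddCommMonoid M] (n : ℕ)
    (F : ℕ → Multiset ℕ → M) :
    ∑ p : n.Partition, ∑ j ∈ p.parts.toFinset, F j (p.parts.erase j) =
      ∑ j ∈ Icc 1 n, ∑ q : (n - j).Partition, F j q.parts := by
  rw [sum_comm' (t' := Icc 1 n) (s' := fun j => univ.filter (j ∈ ·.parts))]
  · refine sum_congr rfl fun j hj => ?_
    obtain ⟨hj1, hjn⟩ := mem_Icc.1 hj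
    rw [sum_subtype _ (p := (j ∈ ·.parts)) (by simp)]
    exact Fintype.sum_equiv (partitionWithPartEquiv hj1 hjn) _ _ fun _ => rfl
  · intro p j
    simp only [mem_univ, true_and, Multiset.mem_toFinset, mem_filter, mem_Icc]
    exact ⟨fun h => ⟨h, p.parts_pos h, le_of_mem_parts h⟩, fun h => h.1⟩

section PartitionSum

variable {R : Type*} [CommRing R]

noncomputable def partitionSum (g : ℕ → R) (n : ℕ) (y : R) : R :=
  ∑ p : n.Partition, (p.parts.bell : R) * (p.parts.map g).prod *
    (descPochhammer R (Multiset.card p.parts)).eval y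

theorem Nat.Partition.sum_choose_mul_bell_erase {n : ℕ} (g h : ℕ → R) (p : n.Partition) :
    ∑ j ∈ p.parts.toFinset, (n.choose j * g j * ((p.parts.erase j).bell *
      ((p.parts.erase j).map g).prod * h (Multiset.card (p.parts.erase j))) : R) =
      p.parts.bell * (p.parts.map g).prod *
        (Multiset.card p.parts * h (Multiset.card p.parts - 1)) := by
  calc _ = ∑ j ∈ p.parts.toFinset, (p.parts.count j : R) *
        (p.parts.bell * (p.parts.map g).prod * h (Multiset.card p.parts - 1)) := by
        refine sum_congr rfl fun j hj => ?_
        have hj := Multiset.mem_toFinset.1 hj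
        have hbell : (n.choose j : R) * (p.parts.erase j).bell =
            p.parts.bell * p.parts.count j := by
          simpa [p.parts_sum] using
            congrArg (Nat.cast : ℕ → R) (p.parts.bell_mul_count (p.parts_pos hj).ne' hj).symm
        rw [Multiset.card_erase_of_mem hj, ← Multiset.prod_map_erase hj, Nat.pred_eq_sub_one]
        linear_combination
          (g j * ((p.parts.erase j).map g).prod * h (Multiset.card p.parts - 1)) * hbell
    _ = _ := by
        rw [← sum_mul, ← Nat.cast_sum, Multiset.toFinset_sum_count_eq]
        ring

theorem partitionSum_add_one (g : ℕ → R) (hg : g 0 = 1) (n : ℕ) (y : R) :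
    partitionSum g n (y + 1) =
      ∑ j ∈ range (n + 1), n.choose j * g j * partitionSum g (n - j) y := by
  calc partitionSum g n (y + 1)
      = partitionSum g n y + ∑ p : n.Partition, (p.parts.bell : R) * (p.parts.map g).prod *
          (Multiset.card p.parts * (descPochhammer R (Multiset.card p.parts - 1)).eval y) := by
        simp only [partitionSum, descPochhammer_eval_add_one, mul_add, sum_add_distrib]
    _ = partitionSum g n y + ∑ j ∈ Icc 1 n, n.choose j * g j * partitionSum g (n - j) y := by
        simp only [partitionSum, mul_sum,
          ← Nat.Partition.sum_choose_mul_bell_erase g fun l => (descPochhammer R l).eval y]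
        rw [Nat.Partition.sum_sum_parts_erase n (fun j μ => (n.choose j * g j *
          (μ.bell * (μ.map g).prod * (descPochhammer R (Multiset.card μ)).eval y) : R))]
    _ = _ := by
        rw [range_eq_Ico, sum_eq_sum_Ico_succ_bot n.succ_pos, zero_add, Nat.succ_eq_add_one,
          Ico_add_one_right_eq_Icc, hg]
        simp

theorem partitionSum_zero (g : ℕ → R) (n : ℕ) : partitionSum g n 0 = 0 ^ n := by
  cases n with
  | zero => simp [partitionSum, Nat.Partition.partition_zero_parts]
  | succ n =>
    refine (sum_eq_zero fun p _ => ?_).trans (zero_pow n.succ_ne_zero).symm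
    have hp : Multiset.card p.parts ≠ 0 := fun h => by
      simpa [Multiset.card_eq_zero.1 h] using p.parts_sum
    rw [descPochhammer_ne_zero_eval_zero _ hp, mul_zero]

end PartitionSum

universe u v

section FiberSum

variable {R : Type*} [CommRing R] {α β : Type*} [Fintype α]

def optionFiberEquiv [DecidableEq α] (S : Finset α) :
    {f : α → Option β // ∀ a, f a = none ↔ a ∈ S} ≃ (↥Sᶜ → β) where
  toFun f a := (f.1 a).get (Option.isSome_iff_ne_none.2 fun h => mem_compl.1 a.2 ((f.2 a).1 h))
  invFun h := ⟨fun a => if ha : a ∈ S then none else some (h ⟨a, mem_compl.2 ha⟩),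
    fun a => by by_cases ha : a ∈ S <;> simp [ha]⟩
  left_inv f := by
    ext a : 2
    by_cases ha : a ∈ S
    · simp [ha, (f.2 a).2 ha]
    · simp [ha]
  right_inv h := funext fun a => by simp [mem_compl.1 a.2]

theorem sum_prod_card_fiber_option [DecidableEq α] [Fintype β] [DecidableEq β] (g : ℕ → R) :
    ∑ f : α → Option β, ∏ c, g #{a | f a = c} =
      ∑ S : Finset α, g #S * ∑ h : ↥Sᶜ → β, ∏ c, g #{a | h a = c} := by
  rw [← sum_fiberwise univ (fun f : α → Option β => ({a | f a = none} : Finset α))]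
  refine sum_congr rfl fun S _ => ?_
  rw [sum_subtype _ (p := fun f : α → Option β => ∀ a, f a = none ↔ a ∈ S)
    (by simp [Finset.ext_iff]), mul_sum]
  refine Fintype.sum_equiv (optionFiberEquiv S) _ _ fun f => ?_
  rw [Fintype.prod_option]
  congr 1
  · congr 2
    ext a
    simp [f.2 a]
  · refine prod_congr rfl fun c _ => congrArg g ?_
    rw [← card_map (Function.Embedding.subtype _)]
    congr 1
    ext a
    simp only [mem_filter, mem_univ, true_and, mem_map, Function.Embedding.coe_subtype]
    constructor
    · intro ha
      have haS : a ∉ S := fun h => by simp [(f.2 a).2 h] at ha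
      exact ⟨⟨a, mem_compl.2 haS⟩, by simp [optionFiberEquiv, ha], rfl⟩
    · rintro ⟨a, ha, rfl⟩
      simp [optionFiberEquiv, ← ha]

theorem sum_prod_card_fiber_congr {γ : Type*} [DecidableEq α] [Fintype β] [Fintype γ]
    [DecidableEq β] [DecidableEq γ] (g : ℕ → R) (e : β ≃ γ) :
    ∑ f : α → β, ∏ c, g #{a | f a = c} = ∑ f : α → γ, ∏ c, g #{a | f a = c} := by
  refine Fintype.sum_equiv ((Equiv.refl α).arrowCongr e) _ _ fun f => ?_
  refine Fintype.prod_equiv e _ _ fun c => ?_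
  simp [Equiv.arrowCongr]

theorem sum_prod_card_fiber_eq_partitionSum (g : ℕ → R) (hg : g 0 = 1) (α : Type u)
    (β : Type v) [Fintype α] [DecidableEq α] [Fintype β] [DecidableEq β] :
    ∑ f : α → β, ∏ c, g #{a | f a = c} =
      partitionSum g (Fintype.card α) (Fintype.card β) := by
  refine Finite.induction_empty_option (P := fun β => ∀ [Fintype β] [DecidableEq β] (α : Type u)
    [Fintype α] [DecidableEq α], ∑ f : α → β, ∏ c, g #{a | f a = c} =
      partitionSum g (Fintype.card α) (Fintype.card β)) ?_ ?_ ?_ β α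
  · intro β γ e ih _ _ α _ _
    have := Fintype.ofEquiv γ e.symm
    classical
    rw [← sum_prod_card_fiber_congr g e, ih, Fintype.card_congr e]
  · intro _ _ α _ _
    simp [partitionSum_zero]
  · intro β _ ih hF hD α _ _
    classical
    obtain rfl : hF = instFintypeOption := Subsingleton.elim _ _
    obtain rfl : hD = Option.instDecidableEq := Subsingleton.elim _ _
    rw [sum_prod_card_fiber_option, Fintype.card_option, Nat.cast_add_one,
      partitionSum_add_one g hg]
    calc ∑ S : Finset α, g #S * ∑ h : ↥Sᶜ → β, ∏ c, g #{a | h a = c}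
        = ∑ S ∈ univ.powerset, g #S * partitionSum g (Fintype.card α - #S) (Fintype.card β) :=
          sum_congr rfl fun S _ => by rw [ih, Fintype.card_coe, card_compl]
      _ = _ := by
          rw [sum_powerset_apply_card (fun j => g j * partitionSum g (Fintype.card α - j) _),
            card_univ]
          simp only [nsmul_eq_mul, mul_assoc]

end FiberSum

section CompleteGraph

variable {n : ℕ}

noncomputable def numComponents (n : ℕ) (A : Finset (KEdge n)) : ℕ :=
  Nat.card (graphOf n A).ConnectedComponent

theorem cycleRk_eq (A : Finset (KEdge n)) : cycleRk n A = n - numComponents n A := rfl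

theorem graphOf_empty (n : ℕ) : graphOf n ∅ = ⊥ := by
  ext; simp [graphOf]

theorem graphOf_univ (n : ℕ) : graphOf n univ = ⊤ := by
  ext i j
  simp only [graphOf, mem_univ, true_and, SimpleGraph.top_adj]
  refine ⟨fun ⟨e, he⟩ h => ?_, fun h => ?_⟩
  · subst h
    have hlt := e.2
    rcases he with he | he <;> rw [he] at hlt <;> exact lt_irrefl i hlt
  · rcases lt_or_gt_of_ne h with h | h
    · exact ⟨⟨(i, j), h⟩, Or.inl rfl⟩
    · exact ⟨⟨(j, i), h⟩, Or.inr rfl⟩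

theorem graphOf_insert (e : KEdge n) (A : Finset (KEdge n)) :
    graphOf n (insert e A) = graphOf n A ⊔ SimpleGraph.edge e.1.1 e.1.2 := by
  ext i j
  simp only [graphOf, SimpleGraph.sup_adj, SimpleGraph.edge_adj, exists_mem_insert, Prod.ext_iff]
  refine or_comm.trans (or_congr_right ⟨?_, ?_⟩)
  · rintro (⟨rfl, rfl⟩ | ⟨rfl, rfl⟩)
    · exact ⟨Or.inl ⟨rfl, rfl⟩, e.2.ne⟩
    · exact ⟨Or.inr ⟨rfl, rfl⟩, e.2.ne'⟩
  · rintro ⟨⟨rfl, rfl⟩ | ⟨rfl, rfl⟩, -⟩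
    · exact Or.inl ⟨rfl, rfl⟩
    · exact Or.inr ⟨rfl, rfl⟩

theorem numComponents_empty (n : ℕ) : numComponents n ∅ = n := by
  rw [numComponents, graphOf_empty,
    ← Nat.card_eq_of_bijective (SimpleGraph.connectedComponentMk _)
      ⟨fun _ _ h => SimpleGraph.reachable_bot.1 (SimpleGraph.ConnectedComponent.exact h),
        Quot.mk_surjective⟩,
    Nat.card_eq_fintype_card, Fintype.card_fin]

theorem numComponents_univ_le_one (n : ℕ) : numComponents n univ ≤ 1 := by
  rw [numComponents, graphOf_univ, Finite.card_le_one_iff_subsingleton]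
  exact SimpleGraph.preconnected_top.subsingleton_connectedComponent

theorem numComponents_pos (hn : 0 < n) (A : Finset (KEdge n)) : 0 < numComponents n A :=
  Nat.card_pos_iff.2 ⟨⟨(graphOf n A).connectedComponentMk ⟨0, hn⟩⟩, inferInstance⟩

theorem numComponents_le (A : Finset (KEdge n)) : numComponents n A ≤ n := by
  calc numComponents n A ≤ numComponents n ∅ := by
        rw [numComponents, numComponents, graphOf_empty]
        exact SimpleGraph.ConnectedComponent.card_le_card_of_le bot_le
    _ = n := numComponents_empty n

theorem numComponents_le_union_add_card (A B : Finset (KEdge n)) :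
    numComponents n A ≤ numComponents n (A ∪ B) + #B := by
  induction B using Finset.induction_on with
  | empty => simp
  | insert e B he ih =>
    have := (graphOf n (A ∪ B)).card_connectedComponent_le_card_sup_edge_add_one e.1.1 e.1.2
    rw [← graphOf_insert] at this
    rw [union_insert, card_insert_of_notMem he]
    simp only [numComponents] at ih ⊢
    omega

theorem card_KEdge (n : ℕ) : Fintype.card (KEdge n) = n * (n - 1) / 2 := by
  change Fintype.card {p : Fin n × Fin n // p.1 < p.2} = _
  rw [Fintype.card_subtype, Fintype.card_product_filter_lt, Fintype.card_fin,
    Nat.choose_two_right]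

theorem bondRk_univ_sub_bondRk_add (A : Finset (KEdge n)) :
    bondRk n univ - bondRk n A + n = #Aᶜ + numComponents n Aᶜ := by
  have h₁ := numComponents_univ_le_one n
  have h₂ := numComponents_le_union_add_card Aᶜ A
  have h₃ := numComponents_le_union_add_card ∅ Aᶜ
  have h₄ := numComponents_le Aᶜ
  have h₅ := card_add_card_compl A
  rw [union_comm, union_compl] at h₂
  rw [empty_union, numComponents_empty] at h₃
  simp only [bondRk, cycleRk_eq, compl_univ, card_univ, numComponents_empty]
  rcases n.eq_zero_or_pos with rfl | hn
  · omega
  · have := numComponents_pos hn univ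
    omega

theorem pow_mul_eval_flowPolyKn (x : ℝ) :
    x ^ n * (flowPolyKn n).eval x =
      (-1) ^ Fintype.card (KEdge n) *
        ∑ B : Finset (KEdge n), (-x) ^ #B * x ^ numComponents n B := by
  have heval : (flowPolyKn n).eval x =
      ∑ A : Finset (KEdge n), (-1) ^ #A * x ^ (bondRk n univ - bondRk n A) := by
    simp [flowPolyKn, Polynomial.eval_finsetSum]
  rw [heval, mul_sum, mul_sum]
  refine Fintype.sum_equiv (Equiv.mk compl compl compl_compl compl_compl) _ _ fun A => ?_
  have hsign : ((-1 : ℝ) ^ #Aᶜ) ^ 2 = 1 := by rw [sq, ← mul_pow, neg_one_mul, neg_neg, one_pow]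
  have hexp : x ^ n * x ^ (bondRk n univ - bondRk n A) = x ^ #Aᶜ * x ^ numComponents n Aᶜ := by
    rw [← pow_add, ← pow_add, add_comm n, bondRk_univ_sub_bondRk_add]
  simp only [Equiv.coe_fn_mk]
  rw [← card_add_card_compl A, neg_pow x]
  linear_combination (-1) ^ #A * hexp - (-1) ^ #A * x ^ #Aᶜ * x ^ numComponents n Aᶜ * hsign

def monoEdges {β : Type*} [DecidableEq β] (f : Fin n → β) : Finset (KEdge n) :=
  {e | f e.1.1 = f e.1.2}

theorem card_filter_subset_monoEdges {β : Type*} [Fintype β] [DecidableEq β]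
    (B : Finset (KEdge n)) :
    #{f : Fin n → β | B ⊆ monoEdges f} = Fintype.card β ^ numComponents n B := by
  rw [← Fintype.card_subtype, ← Nat.card_eq_fintype_card, ← Nat.card_eq_fintype_card (α := β),
    numComponents, ← Nat.card_fun, ← Nat.card_congr (SimpleGraph.ConnectedComponent.liftEquiv β)]
  refine Nat.card_congr <|
    Equiv.subtypeEquivRight fun f => ⟨fun h u v huv => ?_, fun h e he => ?_⟩
  · obtain ⟨e, he, huv | huv⟩ := huv
    · have := (mem_filter.1 (h he)).2
      rwa [huv] at this
    · have := (mem_filter.1 (h he)).2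
      rw [huv] at this
      exact this.symm
  · exact mem_filter.2 ⟨mem_univ _, h ⟨e, he, Or.inl rfl⟩⟩

theorem sum_neg_pow_mul_card_pow_numComponents {R : Type*} [CommRing R] {β : Type*} [Fintype β]
    [DecidableEq β] (x : R) :
    ∑ B : Finset (KEdge n), (-x) ^ #B * (Fintype.card β : R) ^ numComponents n B =
      ∑ f : Fin n → β, (1 - x) ^ #(monoEdges f) := by
  calc ∑ B : Finset (KEdge n), (-x) ^ #B * (Fintype.card β : R) ^ numComponents n B
      = ∑ B : Finset (KEdge n), ∑ f : Fin n → β, if B ⊆ monoEdges f then (-x) ^ #B else 0 := by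
        refine sum_congr rfl fun B _ => ?_
        rw [← sum_filter, sum_const, card_filter_subset_monoEdges, nsmul_eq_mul, mul_comm]
        push_cast
        rfl
    _ = ∑ f : Fin n → β, ∑ B ∈ (monoEdges f).powerset, (-x) ^ #B := by
        rw [sum_comm]
        refine sum_congr rfl fun f _ => ?_
        rw [← sum_filter]
        congr 1
        ext B
        simp
    _ = _ := by
        refine sum_congr rfl fun f _ => ?_
        simpa [neg_add_eq_sub] using sum_pow_mul_eq_add_pow (-x) 1 (monoEdges f)

theorem card_monoEdges {β : Type*} [Fintype β] [DecidableEq β] (f : Fin n → β) :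
    #(monoEdges f) = ∑ c, (#{a | f a = c}).choose 2 := by
  rw [card_eq_sum_card_fiberwise (f := fun e : KEdge n => f e.1.1) (t := univ)
    fun _ _ => mem_univ _]
  refine sum_congr rfl fun c _ => ?_
  rw [← card_product_filter_lt]
  refine card_bij (fun e _ => e.1) (fun e he => ?_) (fun _ _ _ _ h => Subtype.ext h)
    fun p hp => ?_
  · simp only [monoEdges, mem_filter, mem_univ, true_and] at he
    simp only [mem_filter, mem_product, mem_univ, true_and]
    exact ⟨⟨he.2, he.1.symm.trans he.2⟩, e.2⟩
  · simp only [mem_filter, mem_product, mem_univ, true_and] at hp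
    exact ⟨⟨p, hp.2⟩,
      mem_filter.2 ⟨mem_filter.2 ⟨mem_univ _, hp.1.1.trans hp.1.2.symm⟩, hp.1.1⟩, rfl⟩

theorem sum_neg_pow_mul_pow_numComponents_eq_partitionSum {R : Type*} [CommRing R] [IsDomain R]
    [CharZero R] (n : ℕ) (x y : R) :
    ∑ B : Finset (KEdge n), (-x) ^ #B * y ^ numComponents n B =
      partitionSum (fun j => (1 - x) ^ j.choose 2) n y := by
  set g : ℕ → R := fun j => (1 - x) ^ j.choose 2
  have hnat : ∀ q : ℕ, ∑ B : Finset (KEdge n), (-x) ^ #B * (q : R) ^ numComponents n B =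
      partitionSum g n q := by
    intro q
    have hcol := sum_neg_pow_mul_card_pow_numComponents (n := n) (β := Fin q) x
    have hfib := sum_prod_card_fiber_eq_partitionSum g (by simp [g]) (Fin n) (Fin q)
    simp only [Fintype.card_fin] at hcol hfib
    rw [hcol, ← hfib]
    exact sum_congr rfl fun f _ => by rw [card_monoEdges, prod_pow_eq_pow_sum]
  let P : Polynomial R := ∑ B : Finset (KEdge n),
    Polynomial.C ((-x) ^ #B) * Polynomial.X ^ numComponents n B
  let Q : Polynomial R := ∑ p : n.Partition,
    Polynomial.C ((p.parts.bell : R) * (p.parts.map g).prod) *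
      descPochhammer R (Multiset.card p.parts)
  have hP : ∀ z, P.eval z = ∑ B : Finset (KEdge n), (-x) ^ #B * z ^ numComponents n B := by
    simp [P, Polynomial.eval_finsetSum]
  have hQ : ∀ z, Q.eval z = partitionSum g n z := by
    simp [Q, Polynomial.eval_finsetSum, partitionSum]
  have hPQ : P = Q := Polynomial.eq_of_infinite_eval_eq P Q <|
    Set.infinite_of_injective_forall_mem Nat.cast_injective fun q => by
      simp only [Set.mem_ofPred_eq, hP, hQ, hnat]
  rw [← hP, hPQ, hQ]

theorem faaDiBruno_eq_bell (p : n.Partition) : faaDiBruno n p = p.parts.bell := by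
  have h0 : 0 ∉ p.parts.toFinset := fun h =>
    lt_irrefl 0 (p.parts_pos (Multiset.mem_toFinset.1 h))
  rw [faaDiBruno, Multiset.bell_eq, p.parts_sum, erase_eq_of_notMem h0,
    prod_multiset_map_count, ← prod_mul_distrib]

theorem partS_eq_sum_choose_two (p : n.Partition) :
    partS n p = (p.parts.map (·.choose 2)).sum := by
  simp only [partS, Nat.choose_two_right]

end CompleteGraph

theorem flowPoly_completeGraph_general (n : ℕ) (x : ℝ) (hx : x ≠ 0) :
    (flowPolyKn n).eval x =
      ((-1 : ℝ) ^ (n * (n - 1) / 2) / x ^ n) *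
        ∑ lam : n.Partition, (faaDiBruno n lam : ℝ) * (1 - x) ^ partS n lam *
          ∏ j ∈ Finset.range lam.parts.card, (x - (j : ℝ)) := by
  have hsum : ∑ lam : n.Partition, (faaDiBruno n lam : ℝ) * (1 - x) ^ partS n lam *
      ∏ j ∈ Finset.range lam.parts.card, (x - (j : ℝ)) =
        partitionSum (fun j => (1 - x) ^ j.choose 2) n x := by
    refine sum_congr rfl fun p _ => ?_
    rw [faaDiBruno_eq_bell, partS_eq_sum_choose_two, ← Multiset.prod_map_pow_eq_pow_sum,
      ← descPochhammer_eval_eq_prod_range]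
  rw [hsum, ← sum_neg_pow_mul_pow_numComponents_eq_partitionSum, ← card_KEdge,
    div_mul_eq_mul_div, eq_div_iff (pow_ne_zero n hx), mul_comm, pow_mul_eval_flowPolyKn]

/-- The flow polynomial of the complete graph `K_n` as a sum over the integer
partitions `λ` of `n`:
`F_{K_n}(x) = ((-1)^{n(n-1)/2} / x^n) ∑_λ f(λ) (1-x)^{s(λ)} x(x-1)⋯(x-ℓ(λ)+1)`. -/
theorem flowPoly_completeGraph (n : ℕ) (hn : 0 < n) (x : ℝ) (hx : x ≠ 0) :
    (flowPolyKn n).eval x =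
      ((-1 : ℝ) ^ (n * (n - 1) / 2) / x ^ n) *
        ∑ lam : n.Partition, (faaDiBruno n lam : ℝ) * (1 - x) ^ partS n lam *
          ∏ j ∈ Finset.range lam.parts.card, (x - (j : ℝ)) :=
  flowPoly_completeGraph_general n x hx
end

section
/- The characteristic polynomial of the matroid dual to PG(n−1, q) satisfies χ_{PG(n−1,q)*}(x) = ((−1)^{(q^n−1)/(q−1)} / x^n) · Σ_{k=0}^{n} C(n, k)_q · (1 − x)^{(q^k−1)/(q−1)} · ∏_{i=0}^{n−k−1} (x − q^i), where C(n, k)_q is the Gaussian binomial coefficient. -/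
/-!
Complementing `A`, the sum becomes `(-1)^N x^{-n} ∑_B (-x)^{|B|} x^{n - r(B)}` with
`N = (qⁿ - 1)/(q - 1)`. By the `q`-binomial theorem `x^m = ∑_k C(m,k)_q ∏_{i<m-k} (x - qⁱ)`,
applied in `Fⁿ / span B`, the power `x^{n - r(B)}` is the sum of `∏_{i<n-dim W} (x - qⁱ)` over
the subspaces `W ⊇ span B`. Exchanging the sums, the inner sum over the sets `B` of points of `W`
is `(1 - x)^{#points of W}`, and there are `C(n,k)_q` subspaces of each dimension `k`.
-/

open Finset

variable (F : Type*) [Field F] [Fintype F] (n : ℕ)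

/-- The ground set of the matroid `PG(n-1, q)`: the points of the projective
space of dimension `n-1` over `F = 𝔽_q`, i.e. lines through the origin in `Fⁿ`. -/
abbrev PGPoint := Projectivization F (Fin n → F)

/-- The rank function of the matroid `PG(n-1, q)`: the rank of a set of
projective points is the dimension of their linear span. -/
noncomputable def pgRk [Fintype (PGPoint F n)] (A : Finset (PGPoint F n)) : ℕ :=
  Module.finrank F ↥(⨆ p ∈ A, Projectivization.submodule p)

/-- The rank function of the matroid dual to `PG(n-1, q)`. -/
noncomputable def pgDualRk {F : Type*} [Field F] [Fintype F] (n : ℕ)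
    [Fintype (PGPoint F n)] [DecidableEq (PGPoint F n)]
    (A : Finset (PGPoint F n)) : ℕ :=
  pgRk F n Aᶜ + A.card - pgRk F n univ


open Module
open scoped LinearAlgebra.Projectivization

section QBinomial

variable {K : Type*} [Field K] {q : K}

noncomputable def qBinom (q : K) (m k : ℕ) : K :=
  ∏ i ∈ range k, (q ^ (m - i) - 1) / (q ^ (k - i) - 1)

@[simp]
lemma qBinom_zero_right (q : K) (m : ℕ) : qBinom q m 0 = 1 := by simp [qBinom]

@[simp]
lemma qBinom_succ_self (q : K) (m : ℕ) : qBinom q m (m + 1) = 0 :=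
  prod_eq_zero (i := m) (by simp) (by simp)

lemma qBinom_succ_succ (hq : ∀ j, 0 < j → q ^ j ≠ 1) {m d : ℕ} (hd : d ≤ m) :
    qBinom q (m + 1) (d + 1) = qBinom q m (d + 1) + q ^ (m - d) * qBinom q m d := by
  have hne : ∀ j, 0 < j → q ^ j - 1 ≠ 0 := fun j hj => sub_ne_zero.mpr (hq j hj)
  have hden : ∏ i ∈ range d, (q ^ (d - i) - 1) ≠ 0 :=
    prod_ne_zero_iff.mpr fun i hi => hne _ (by simp at hi; omega)
  simp only [qBinom, prod_div_distrib]
  rw [prod_range_succ' (fun i => q ^ (m + 1 - i) - 1),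
    prod_range_succ' (fun i => q ^ (d + 1 - i) - 1), prod_range_succ (fun i => q ^ (m - i) - 1)]
  simp only [Nat.add_sub_add_right, Nat.sub_zero]
  have hpow : q ^ (m + 1) = q ^ (m - d) * q ^ (d + 1) := by rw [← pow_add]; congr 1; omega
  rw [hpow]
  field_simp [hden, hne (d + 1) d.succ_pos]
  ring

theorem sum_qBinom_mul_prod_sub_pow (hq : ∀ j, 0 < j → q ^ j ≠ 1) (x : K) (m : ℕ) :
    ∑ d ∈ range (m + 1), qBinom q m d * ∏ i ∈ range (m - d), (x - q ^ i) = x ^ m := by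
  induction m with
  | zero => simp
  | succ m ih =>
    have hshift : ∑ d ∈ range (m + 1), qBinom q m d * ∏ i ∈ range (m + 1 - d), (x - q ^ i) =
        ∑ d ∈ range (m + 1), qBinom q m (d + 1) * ∏ i ∈ range (m - d), (x - q ^ i) +
          ∏ i ∈ range (m + 1), (x - q ^ i) := by
      have h := sum_range_succ' (fun d => qBinom q m d * ∏ i ∈ range (m + 1 - d), (x - q ^ i))
        (m + 1)
      rw [sum_range_succ, qBinom_succ_self, zero_mul, add_zero] at h
      simpa using h
    calc ∑ d ∈ range (m + 1 + 1), qBinom q (m + 1) d * ∏ i ∈ range (m + 1 - d), (x - q ^ i)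
        = ∑ d ∈ range (m + 1), qBinom q m (d + 1) * ∏ i ∈ range (m - d), (x - q ^ i) +
            ∏ i ∈ range (m + 1), (x - q ^ i) +
            ∑ d ∈ range (m + 1),
              q ^ (m - d) * qBinom q m d * ∏ i ∈ range (m - d), (x - q ^ i) := by
          rw [sum_range_succ', sum_congr rfl fun d hd => by
            rw [qBinom_succ_succ hq (Nat.lt_succ_iff.mp (mem_range.mp hd))]]
          simp only [add_mul, sum_add_distrib, Nat.add_sub_add_right, qBinom_zero_right, one_mul,
            Nat.sub_zero]
          ring
      _ = ∑ d ∈ range (m + 1), qBinom q m d * (∏ i ∈ range (m - d), (x - q ^ i)) * x := by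
          rw [← hshift, ← sum_add_distrib]
          refine sum_congr rfl fun d hd => ?_
          rw [Nat.sub_add_comm (Nat.lt_succ_iff.mp (mem_range.mp hd)), prod_range_succ]
          ring
      _ = x ^ (m + 1) := by rw [← sum_mul, ih, pow_succ]

lemma qBinom_eq_prod_sub_div (hq : q ≠ 0) {m k : ℕ} (hkm : k ≤ m) :
    qBinom q m k = ∏ i ∈ range k, (q ^ m - q ^ i) / (q ^ k - q ^ i) := by
  refine prod_congr rfl fun i hi => ?_
  have hpow : ∀ j, i ≤ j → q ^ j - q ^ i = q ^ i * (q ^ (j - i) - 1) := fun j hij => by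
    rw [mul_sub, ← pow_add, Nat.add_sub_cancel' hij, mul_one]
  have hik : i ≤ k := (mem_range.mp hi).le
  rw [hpow m (hik.trans hkm), hpow k hik, mul_div_mul_left _ _ (pow_ne_zero i hq)]

lemma neg_one_pow_sub_mul_pow_sub {x : K} (hx : x ≠ 0) {N b r m : ℕ}
    (hb : b ≤ N) (hrb : r ≤ b) (hrm : r ≤ m) :
    (-1) ^ (N - b) * x ^ (b - r) = (-1) ^ N / x ^ m * ((-x) ^ b * x ^ (m - r)) := by
  rw [pow_sub₀ _ (by norm_num) hb, pow_sub₀ _ hx hrb, pow_sub₀ _ hx hrm, neg_pow x,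
    ← inv_pow, inv_neg_one]
  field_simp

end QBinomial

instance Submodule.finite_of_finite {R M : Type*} [Semiring R] [AddCommMonoid M] [Module R M]
    [Finite M] : Finite (Submodule R M) :=
  Finite.of_injective _ SetLike.coe_injective

section FiniteDimensional

variable {K V : Type*} [DivisionRing K] [AddCommGroup V] [Module K V] [FiniteDimensional K V]

noncomputable def linearIndependentSpanEquiv {k : ℕ} (W : Submodule K V) (hW : finrank K W = k) :
    {s : {s : Fin k → V // LinearIndependent K s} // Submodule.span K (Set.range s.1) = W} ≃
      {u : Fin k → W // LinearIndependent K u} where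
  toFun s := ⟨fun i => ⟨s.1.1 i, s.2.le (Submodule.subset_span (Set.mem_range_self i))⟩,
    LinearIndependent.of_comp W.subtype s.1.2⟩
  invFun u := ⟨⟨W.subtype ∘ u.1, u.2.map' W.subtype W.ker_subtype⟩, by
    have hspan : Submodule.span K (Set.range u.1) = ⊤ :=
      Submodule.eq_top_of_finrank_eq (by rw [finrank_span_eq_card u.2, hW, Fintype.card_fin])
    rw [Set.range_comp, ← Submodule.map_span, hspan, Submodule.map_subtype_top]⟩
  left_inv _ := rfl
  right_inv _ := rfl

theorem finrank_comap_mkQ (U : Submodule K V) (W : Submodule K (V ⧸ U)) :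
    finrank K (W.comap U.mkQ) = finrank K W + finrank K U := by
  let f := U.mkQ.domRestrict (W.comap U.mkQ)
  have hrange : LinearMap.range f = W := by
    rw [LinearMap.range_domRestrict, Submodule.map_comap_eq_of_surjective U.mkQ_surjective]
  have hker : LinearMap.ker f = U.comap (W.comap U.mkQ).subtype := by
    rw [LinearMap.ker_domRestrict, Submodule.ker_mkQ]
  have hU : finrank K (U.comap (W.comap U.mkQ).subtype) = finrank K U :=
    (Submodule.comapSubtypeEquivOfLe (Submodule.le_comap_mkQ U W)).finrank_eq
  rw [← LinearMap.finrank_range_add_finrank_ker f, hrange, hker, hU]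

end FiniteDimensional

namespace Projectivization

variable {K V W : Type*} [DivisionRing K] [AddCommGroup V] [Module K V] [AddCommGroup W]
  [Module K W]

theorem submodule_map (f : V →ₗ[K] W) (hf : Function.Injective f) (p : ℙ K V) :
    (map f hf p).submodule = p.submodule.map f := by
  induction p using ind with
  | h v hv => rw [map_mk, submodule_mk, submodule_mk, Submodule.map_span, Set.image_singleton]

theorem range_map_subtype (U : Submodule K V) :
    Set.range (map U.subtype U.injective_subtype) = {p | p.submodule ≤ U} := by
  ext p
  constructor
  · rintro ⟨p, rfl⟩
    rw [Set.mem_ofPred_eq, submodule_map]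
    exact Submodule.map_subtype_le U _
  · intro hp
    have hrep : p.rep ∈ U := hp (by rw [submodule_eq]; exact Submodule.mem_span_singleton_self _)
    refine ⟨mk K ⟨p.rep, hrep⟩ (by simpa using p.rep_nonzero), ?_⟩
    rw [map_mk]
    exact p.mk_rep

theorem iSup_submodule : ⨆ p : ℙ K V, p.submodule = ⊤ := by
  refine eq_top_iff.mpr fun v _ => ?_
  by_cases hv : v = 0
  · exact hv ▸ Submodule.zero_mem _
  · exact Submodule.mem_iSup_of_mem (mk K v hv)
      (by rw [submodule_mk]; exact Submodule.mem_span_singleton_self v)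

theorem finrank_biSup_submodule_le_card (B : Finset (ℙ K V)) :
    finrank K ↥(⨆ p ∈ B, p.submodule) ≤ B.card := by
  classical
  have hspan : ⨆ p ∈ B, p.submodule = Submodule.span K ↑(B.image Projectivization.rep) := by
    rw [coe_image, Set.image_eq_iUnion, Submodule.span_iUnion₂]
    simp [submodule_eq]
  exact hspan ▸ (finrank_span_finset_le_card _).trans card_image_le

end Projectivization

section FiniteField

variable {F V : Type*} [Field F] [Fintype F] [AddCommGroup V] [Module F V] [Finite V]

local notation "q" => Fintype.card F

theorem card_submodule_finrank_mul {k : ℕ} (hk : k ≤ finrank F V) :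
    Nat.card {W : Submodule F V // finrank F W = k} * ∏ i ∈ range k, (q ^ k - q ^ i) =
      ∏ i ∈ range k, (q ^ finrank F V - q ^ i) := by
  have := Fintype.ofFinite {W : Submodule F V // finrank F W = k}
  let span (s : {s : Fin k → V // LinearIndependent F s}) :
      {W : Submodule F V // finrank F W = k} :=
    ⟨Submodule.span F (Set.range s.1), by rw [finrank_span_eq_card s.2, Fintype.card_fin]⟩
  have hfiber (W : {W : Submodule F V // finrank F W = k}) :
      Nat.card {s // span s = W} = ∏ i ∈ range k, (q ^ k - q ^ i) := by
    have hbases := card_linearIndependent (K := F) (V := W.1) W.2.ge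
    rw [W.2, Fin.prod_univ_eq_prod_range (fun i => q ^ k - q ^ i)] at hbases
    rw [← hbases, ← Nat.card_congr (linearIndependentSpanEquiv W.1 W.2)]
    exact Nat.card_congr (Equiv.subtypeEquivRight fun s => Subtype.ext_iff)
  rw [← Fin.prod_univ_eq_prod_range (fun i => q ^ finrank F V - q ^ i),
    ← card_linearIndependent hk, ← Nat.card_congr (Equiv.sigmaFiberEquiv span), Nat.card_sigma]
  simp [hfiber]

theorem natCast_card_submodule_finrank {k : ℕ} (hk : k ≤ finrank F V) :
    (Nat.card {W : Submodule F V // finrank F W = k} : ℝ) = qBinom (q : ℝ) (finrank F V) k := by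
  have hq : (1 : ℝ) < q := by exact_mod_cast Fintype.one_lt_card
  have hcast : ∀ j, ∀ i < j, ((q ^ j - q ^ i : ℕ) : ℝ) = (q : ℝ) ^ j - (q : ℝ) ^ i :=
    fun j i hij => by
      rw [Nat.cast_sub (Nat.pow_le_pow_right Fintype.card_pos hij.le)]
      push_cast; rfl
  have h := congrArg (Nat.cast : ℕ → ℝ) (card_submodule_finrank_mul (F := F) (V := V) hk)
  rw [Nat.cast_mul, Nat.cast_prod, Nat.cast_prod,
    prod_congr rfl fun i hi => hcast k i (mem_range.mp hi),
    prod_congr rfl fun i hi => hcast _ i ((mem_range.mp hi).trans_le hk)] at h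
  rw [qBinom_eq_prod_sub_div (by positivity) hk, prod_div_distrib, eq_div_iff, h]
  exact prod_ne_zero_iff.mpr fun i hi =>
    sub_ne_zero.mpr (pow_lt_pow_right₀ hq (mem_range.mp hi)).ne'

theorem sum_submodule_eq_sum_qBinom [Fintype (Submodule F V)] (f : ℕ → ℝ) :
    ∑ W : Submodule F V, f (finrank F W) =
      ∑ k ∈ range (finrank F V + 1), qBinom (q : ℝ) (finrank F V) k * f k := by
  classical
  rw [← sum_fiberwise_of_maps_to (g := fun W : Submodule F V => finrank F W)
    fun W _ => mem_range.mpr (Nat.lt_succ_of_le W.finrank_le)]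
  refine sum_congr rfl fun k hk => ?_
  rw [sum_congr rfl fun W hW => by rw [(mem_filter.mp hW).2], sum_const, nsmul_eq_mul,
    ← natCast_card_submodule_finrank (Nat.lt_succ_iff.mp (mem_range.mp hk)),
    Nat.card_eq_fintype_card, Fintype.card_subtype]

theorem sum_submodule_prod_sub_pow [Fintype (Submodule F V)] (x : ℝ) :
    ∑ W : Submodule F V, ∏ i ∈ range (finrank F V - finrank F W), (x - (q : ℝ) ^ i) =
      x ^ finrank F V := by
  have hq : (1 : ℝ) < q := by exact_mod_cast Fintype.one_lt_card
  rw [sum_submodule_eq_sum_qBinom fun k => ∏ i ∈ range (finrank F V - k), (x - (q : ℝ) ^ i)]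
  exact sum_qBinom_mul_prod_sub_pow (fun j hj => (one_lt_pow₀ hq hj.ne').ne') x _

open scoped Classical in
theorem sum_submodule_ge_prod_sub_pow [Fintype (Submodule F V)] (U : Submodule F V) (x : ℝ) :
    ∑ W with U ≤ W, ∏ i ∈ range (finrank F V - finrank F W), (x - (q : ℝ) ^ i) =
      x ^ (finrank F V - finrank F U) := by
  have : Finite (V ⧸ U) := Finite.of_surjective _ U.mkQ_surjective
  have := Fintype.ofFinite (Submodule F (V ⧸ U))
  have hquot : finrank F (V ⧸ U) = finrank F V - finrank F U := by
    have := Submodule.finrank_quotient_add_finrank U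
    omega
  rw [← hquot, ← sum_submodule_prod_sub_pow (V := V ⧸ U) x]
  symm
  refine sum_nbij' (fun W => W.comap U.mkQ) (fun W => W.map U.mkQ) ?_ ?_ ?_ ?_ ?_
  · simp [Submodule.le_comap_mkQ]
  · simp
  · intro W _
    exact Submodule.map_comap_eq_self (by simp)
  · intro W hW
    simp [Submodule.comap_map_mkQ, (mem_filter.mp hW).2]
  · intro W _
    rw [finrank_comap_mkQ, hquot, Nat.sub_sub, add_comm]

theorem natCard_points_le (W : Submodule F V) :
    Nat.card {p : ℙ F V // p.submodule ≤ W} = (q ^ finrank F W - 1) / (q - 1) :=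
  calc Nat.card {p : ℙ F V // p.submodule ≤ W}
      = Nat.card (Set.range (Projectivization.map W.subtype W.injective_subtype)) :=
        Nat.card_congr (Equiv.setCongr (Projectivization.range_map_subtype W).symm)
    _ = Nat.card (ℙ F W) :=
        (Nat.card_congr (Equiv.ofInjective _ (Projectivization.map_injective _ _))).symm
    _ = (q ^ finrank F W - 1) / (q - 1) := by
        rw [Projectivization.card'', Module.natCard_eq_pow_finrank (K := F),
          Nat.card_eq_fintype_card]

theorem sum_neg_pow_card_mul_pow_corank [Fintype (ℙ F V)] [Fintype (Submodule F V)] (x : ℝ) :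
    ∑ B : Finset (ℙ F V),
        (-x) ^ B.card * x ^ (finrank F V - finrank F ↥(⨆ p ∈ B, p.submodule)) =
      ∑ W : Submodule F V, (1 - x) ^ ((q ^ finrank F W - 1) / (q - 1)) *
        ∏ i ∈ range (finrank F V - finrank F W), (x - (q : ℝ) ^ i) := by
  classical
  set P : Submodule F V → ℝ :=
    fun W => ∏ i ∈ range (finrank F V - finrank F W), (x - (q : ℝ) ^ i)
  have hsubsets (W : Submodule F V) :
      univ.filter (fun B : Finset (ℙ F V) => (⨆ p ∈ B, p.submodule) ≤ W) =
        (univ.filter fun p : ℙ F V => p.submodule ≤ W).powerset := by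
    ext B
    simp [subset_iff]
  calc ∑ B : Finset (ℙ F V),
        (-x) ^ B.card * x ^ (finrank F V - finrank F ↥(⨆ p ∈ B, p.submodule))
      = ∑ B : Finset (ℙ F V), ∑ W : Submodule F V,
          if (⨆ p ∈ B, p.submodule) ≤ W then (-x) ^ B.card * P W else 0 := by
        refine sum_congr rfl fun B _ => ?_
        rw [← sum_submodule_ge_prod_sub_pow, mul_sum, sum_filter]
    _ = ∑ W : Submodule F V,
          (∑ B ∈ (univ.filter fun p : ℙ F V => p.submodule ≤ W).powerset, (-x) ^ B.card) *
            P W := by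
        rw [sum_comm]
        refine sum_congr rfl fun W _ => ?_
        rw [← sum_filter, hsubsets, sum_mul]
    _ = _ := by
        refine sum_congr rfl fun W _ => ?_
        rw [← natCard_points_le W, Nat.card_eq_fintype_card, Fintype.card_subtype,
          sub_eq_neg_add, ← sum_pow_mul_eq_add_pow]
        simp [P]

end FiniteField

section PGRank

variable [Fintype (PGPoint F n)]

omit [Fintype F]

theorem pgRk_le_card (A : Finset (PGPoint F n)) : pgRk F n A ≤ A.card :=
  Projectivization.finrank_biSup_submodule_le_card A

theorem pgRk_le (A : Finset (PGPoint F n)) : pgRk F n A ≤ n :=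
  (Submodule.finrank_le _).trans_eq (finrank_fin_fun F)

theorem pgRk_univ : pgRk F n univ = n := by
  have htop : ⨆ p ∈ (univ : Finset (PGPoint F n)), p.submodule = ⊤ := by
    simpa using Projectivization.iSup_submodule
  rw [pgRk, htop, finrank_top, finrank_fin_fun]

theorem pgRk_univ_le [DecidableEq (PGPoint F n)] (A : Finset (PGPoint F n)) :
    pgRk F n univ ≤ pgRk F n Aᶜ + A.card :=
  calc pgRk F n univ
        = finrank F ↥((⨆ p ∈ Aᶜ, p.submodule) ⊔ ⨆ p ∈ A, p.submodule) := by
          rw [pgRk, ← Finset.iSup_union, ← union_compl A, union_comm]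
    _ ≤ pgRk F n Aᶜ + pgRk F n A := Submodule.finrank_add_le_finrank_add_finrank _ _
    _ ≤ pgRk F n Aᶜ + A.card := Nat.add_le_add_left (pgRk_le_card F n A) _

end PGRank

theorem pgDualRk_univ_sub [Fintype (PGPoint F n)] [DecidableEq (PGPoint F n)]
    (A : Finset (PGPoint F n)) :
    pgDualRk n (univ : Finset (PGPoint F n)) - pgDualRk n A = Aᶜ.card - pgRk F n Aᶜ := by
  have hsub := pgRk_univ_le F n A
  have hle := pgRk_le_card F n Aᶜ
  have hcompl := card_compl A
  have hcard := card_le_univ A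
  have hempty : pgRk F n ∅ = 0 := by simp [pgRk]
  simp only [pgDualRk, compl_univ, card_univ, pgRk_univ, hempty] at *
  omega

/-- The characteristic polynomial of the matroid dual to `PG(n-1, q)`:
`χ_{PG(n-1,q)*}(x) = ((-1)^{(qⁿ-1)/(q-1)} / xⁿ) ∑_{k=0}^{n} C(n,k)_q (1-x)^{(q^k-1)/(q-1)}
∏_{i=0}^{n-k-1} (x - qⁱ)`. -/
theorem charPoly_PG_dual {F : Type*} [Field F] [Fintype F] (n : ℕ)
    [Fintype (PGPoint F n)] [DecidableEq (PGPoint F n)] (x : ℝ) (hx : x ≠ 0) :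
    (∑ A : Finset (PGPoint F n),
        (-1 : ℝ) ^ A.card * x ^ (pgDualRk n (univ : Finset (PGPoint F n)) - pgDualRk n A)) =
      ((-1 : ℝ) ^ ((Fintype.card F ^ n - 1) / (Fintype.card F - 1)) / x ^ n) *
        ∑ k ∈ Finset.range (n + 1),
          (∏ i ∈ Finset.range k,
              ((Fintype.card F : ℝ) ^ (n - i) - 1) / ((Fintype.card F : ℝ) ^ (k - i) - 1)) *
            (1 - x) ^ ((Fintype.card F ^ k - 1) / (Fintype.card F - 1)) *
            ∏ i ∈ Finset.range (n - k), (x - (Fintype.card F : ℝ) ^ i) := by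
  have := Fintype.ofFinite (Submodule F (Fin n → F))
  set q := Fintype.card F
  set N := Fintype.card (PGPoint F n)
  have hN : (q ^ n - 1) / (q - 1) = N := by
    simpa [Nat.card_eq_fintype_card] using
      (natCard_points_le (⊤ : Submodule F (Fin n → F))).symm
  have hpoints : ∑ B : Finset (PGPoint F n), (-x) ^ B.card * x ^ (n - pgRk F n B) =
      ∑ k ∈ range (n + 1), qBinom (q : ℝ) n k *
        ((1 - x) ^ ((q ^ k - 1) / (q - 1)) * ∏ i ∈ range (n - k), (x - (q : ℝ) ^ i)) := by
    have h := sum_neg_pow_card_mul_pow_corank (F := F) (V := Fin n → F) x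
    rwa [sum_submodule_eq_sum_qBinom fun k => (1 - x) ^ ((q ^ k - 1) / (q - 1)) *
      ∏ i ∈ range (finrank F (Fin n → F) - k), (x - (q : ℝ) ^ i), finrank_fin_fun] at h
  calc ∑ A : Finset (PGPoint F n), (-1 : ℝ) ^ A.card * x ^ (pgDualRk n univ - pgDualRk n A)
      = ∑ B : Finset (PGPoint F n), (-1 : ℝ) ^ (N - B.card) * x ^ (B.card - pgRk F n B) :=
        Fintype.sum_bijective compl compl_involutive.bijective _ _ fun A => by
          rw [pgDualRk_univ_sub, card_compl, Nat.sub_sub_self (card_le_univ A)]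
    _ = (-1 : ℝ) ^ N / x ^ n *
          ∑ B : Finset (PGPoint F n), (-x) ^ B.card * x ^ (n - pgRk F n B) := by
        rw [mul_sum]
        exact sum_congr rfl fun B _ => neg_one_pow_sub_mul_pow_sub hx (card_le_univ B)
          (pgRk_le_card F n B) (pgRk_le F n B)
    _ = _ := by simp only [hN, hpoints, qBinom, mul_assoc]
end
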